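/- Let X, Y be Polish spaces with Borel probability measures μ, ν and c : X × Y → [0,∞] Borel measurable. Let π, π₀ ∈ Π(μ,ν) have finite cost, and let Γ ⊆ X × Y be a Borel set with π(Γ) = 1 on which c is finite. Let I = {0,…,n} or ℕ, let (Cᵢ)_{i∈I} be pairwise disjoint Borel subsets of X and (Dᵢ)_{i∈I} pairwise disjoint Borel subsets of Y, such that the equivalence classes of the relation ≈_{c,Γ} are exactly the sets Γ ∩ (Cᵢ × Dᵢ). Then π₀(⋃_{i∈I} Cᵢ × Dᵢ) = 1. -/

import Mathlib

/-!
Pick representatives `p i` of the classes. Since every point of `Γ` is `≈` to the representative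
of its block, `i ≤ j ↔ p i ≲ p j` is a partial order on `I`. If `π₀` charges `C i ×ˢ D j`, a
`π₀`-typical point `(x, y)` there has finite cost, and disintegrating `π` (which lives on `Γ`)
gives points `(x, y')` and `(x', y)` of `Γ`; the one-step chain `(x', y) → (x, y')` shows
`p j ≲ p i`. So the matrix `a i j = π₀ (C i ×ˢ D j)` only carries mass downwards, while its row
sums `μ (C i)` and column sums `ν (D i)` agree because `π` lives on `⋃ i, C i ×ˢ D i`. If
`a i j ≠ 0` with `i ≠ j`, the strict upper set `U` of `j` contains `i` and receives mass only from
itself; comparing row and column sums over `U` shows that no mass leaves `U`, a contradiction.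
Hence `a` is diagonal and `π₀ (⋃ i, C i ×ˢ D i) = ∑' i, μ (C i) = 1`.
-/

open MeasureTheory Set
open scoped ENNReal

noncomputable section

def IsCoupling {X Y : Type*} [MeasurableSpace X] [MeasurableSpace Y]
    (μ : Measure X) (ν : Measure Y) (π : Measure (X × Y)) : Prop :=
  π.map Prod.fst = μ ∧ π.map Prod.snd = ν

def CMonotoneSet {X Y : Type*} (c : X × Y → ℝ≥0∞) (Γ : Set (X × Y)) : Prop :=
  ∀ (n : ℕ) (f : Fin (n + 1) → X × Y), (∀ i, f i ∈ Γ) →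
    ∑ i, c (f i) ≤ ∑ i, c ((f i).1, (f (i + 1)).2)

def ChainLe {X Y : Type*} (c : X × Y → ℝ≥0∞) (Γ : Set (X × Y)) (p q : X × Y) : Prop :=
  ∃ (n : ℕ) (g : Fin (n + 1) → X × Y), (∀ i, g i ∈ Γ) ∧ g 0 = p ∧ g (Fin.last n) = q ∧
    ∀ i : Fin n, c ((g i.succ).1, (g i.castSucc).2) < ⊤

def ChainEquiv {X Y : Type*} (c : X × Y → ℝ≥0∞) (Γ : Set (X × Y)) (p q : X × Y) : Prop :=
  ChainLe c Γ p q ∧ ChainLe c Γ q p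

def Connecting {X Y : Type*} (c : X × Y → ℝ≥0∞) (Γ : Set (X × Y)) : Prop :=
  (∀ p ∈ Γ, c p < ⊤) ∧ ∀ p ∈ Γ, ∀ q ∈ Γ, ChainEquiv c Γ p q

open Function

section Chains

variable {X Y : Type*} {c : X × Y → ℝ≥0∞} {Γ : Set (X × Y)} {p q r : X × Y}

-- ℕ-indexed chains can be concatenated without `Fin` casts.
lemma chainLe_iff_nat : ChainLe c Γ p q ↔ ∃ (n : ℕ) (g : ℕ → X × Y),
    (∀ i ≤ n, g i ∈ Γ) ∧ g 0 = p ∧ g n = q ∧ ∀ i < n, c ((g (i + 1)).1, (g i).2) < ⊤ := by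
  constructor
  · rintro ⟨n, g, hmem, h0, hn, hlink⟩
    refine ⟨n, fun k => g ⟨min k n, by omega⟩, fun i _ => hmem _, by simpa using h0,
      by simpa [Fin.last] using hn, fun i hi => ?_⟩
    have h1 : min (i + 1) n = i + 1 := by omega
    have h2 : min i n = i := by omega
    simpa [h1, h2] using hlink ⟨i, hi⟩
  · rintro ⟨n, g, hmem, h0, hn, hlink⟩
    exact ⟨n, fun i => g i, fun i => hmem _ (by omega), h0, hn, fun i => hlink i i.isLt⟩

lemma chainLe_refl (hp : p ∈ Γ) : ChainLe c Γ p p :=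
  ⟨0, fun _ => p, fun _ => hp, rfl, rfl, fun i => i.elim0⟩

lemma chainLe_of_cost_lt_top (hp : p ∈ Γ) (hq : q ∈ Γ) (hc : c (q.1, p.2) < ⊤) :
    ChainLe c Γ p q :=
  ⟨1, ![p, q], fun i => by fin_cases i <;> assumption, rfl, rfl,
    fun i => by fin_cases i; exact hc⟩

lemma chainEquiv_refl (hp : p ∈ Γ) : ChainEquiv c Γ p p :=
  ⟨chainLe_refl hp, chainLe_refl hp⟩

lemma ChainLe.trans (h₁ : ChainLe c Γ p q) (h₂ : ChainLe c Γ q r) : ChainLe c Γ p r := by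
  rw [chainLe_iff_nat] at h₁ h₂ ⊢
  obtain ⟨n, g, hg, hg0, hgn, hglink⟩ := h₁
  obtain ⟨m, h, hh, hh0, hhm, hhlink⟩ := h₂
  refine ⟨n + m, fun k => if k ≤ n then g k else h (k - n), fun i hi => ?_, by simp [hg0], ?_,
    fun i hi => ?_⟩
  · dsimp only
    split_ifs with hin
    · exact hg i hin
    · exact hh _ (by omega)
  · rcases Nat.eq_zero_or_pos m with rfl | hm
    · simp [hgn, ← hh0, hhm]
    · simp [show ¬ n + m ≤ n by omega, hhm]
  · rcases lt_trichotomy i n with hlt | rfl | hgt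
    · simpa [show i + 1 ≤ n by omega, hlt.le] using hglink i hlt
    · simpa [hh0, ← hgn] using hhlink 0 (by omega)
    · simpa [show ¬ i + 1 ≤ n by omega, show ¬ i ≤ n by omega, show i + 1 - n = i - n + 1 by omega]
        using hhlink (i - n) (by omega)

end Chains

section BalancedMatrix

variable {I : Type*} {a : I → I → ℝ≥0∞}

lemma tsum_tsum_compl_eq_zero_of_row_eq_col (hfin : ∑' i, ∑' j, a i j ≠ ⊤)
    (hbal : ∀ i, ∑' j, a i j = ∑' j, a j i) {U : Set I}
    (hU : ∀ i k, k ∈ U → a i k ≠ 0 → i ∈ U) :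
    ∑' i : U, ∑' k : ↥Uᶜ, a i k = 0 := by
  set L := ∑' i : U, ∑' k : U, a i k
  have hrows : ∑' i : U, ∑' k, a i k = L + ∑' i : U, ∑' k : ↥Uᶜ, a i k := by
    rw [← ENNReal.tsum_add]
    exact tsum_congr fun i => (Summable.tsum_add_tsum_compl ENNReal.summable ENNReal.summable).symm
  have hcols : ∑' k : U, ∑' i, a i k = L := by
    rw [show L = ∑' k : U, ∑' i : U, a i k from ENNReal.tsum_comm]
    exact tsum_congr fun k => (tsum_subtype_eq_of_support_subset fun i hi => hU i k k.2 hi).symm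
  have hL : L ≠ ⊤ := by
    refine ne_top_of_le_ne_top hfin ?_
    calc L ≤ ∑' i : U, ∑' k, a i k := hrows ▸ le_self_add
      _ ≤ ∑' i, ∑' k, a i k :=
        ENNReal.tsum_comp_le_tsum_of_injective Subtype.val_injective fun i => ∑' k, a i k
  rw [← ENNReal.add_right_inj hL, add_zero, ← hrows, ← hcols]
  exact tsum_congr fun i => hbal i

lemma eq_zero_of_ne_of_row_eq_col (hfin : ∑' i, ∑' j, a i j ≠ ⊤)
    (hbal : ∀ i, ∑' j, a i j = ∑' j, a j i) {r : I → I → Prop} [IsTrans I r]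
    [Std.Antisymm r] (hsupp : ∀ i j, a i j ≠ 0 → r j i) {i j : I} (hij : i ≠ j) :
    a i j = 0 := by
  by_contra hne
  set U : Set I := {k | r j k ∧ ¬ r k j}
  have hi : i ∈ U := ⟨hsupp i j hne, fun h => hij (antisymm h (hsupp i j hne))⟩
  have hj : j ∉ U := fun h => h.2 h.1
  have hUclosed : ∀ i' k, k ∈ U → a i' k ≠ 0 → i' ∈ U := fun i' k hk h =>
    ⟨trans_of r hk.1 (hsupp _ _ h), fun h' => hk.2 (trans_of r (hsupp _ _ h) h')⟩
  refine hne (le_antisymm ?_ zero_le)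
  calc a i j ≤ ∑' k : ↥Uᶜ, a i k := ENNReal.le_tsum (⟨j, hj⟩ : ↥Uᶜ)
    _ ≤ ∑' i' : U, ∑' k : ↥Uᶜ, a i' k :=
      ENNReal.le_tsum (f := fun i' : U => ∑' k : ↥Uᶜ, a i' k) ⟨i, hi⟩
    _ = 0 := tsum_tsum_compl_eq_zero_of_row_eq_col hfin hbal hUclosed

end BalancedMatrix

lemma Set.preimage_fst_inter_iUnion_prod {X Y I : Type*} {C : I → Set X} (D : I → Set Y)
    (hC : Pairwise (Disjoint on C)) (i : I) :
    Prod.fst ⁻¹' C i ∩ ⋃ j, C j ×ˢ D j = C i ×ˢ D i := by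
  ext q
  simp only [mem_inter_iff, mem_preimage, mem_iUnion, mem_prod]
  refine ⟨fun ⟨hi, j, hj, hjD⟩ => ?_, fun ⟨hi, hiD⟩ => ⟨hi, i, hi, hiD⟩⟩
  obtain rfl : j = i := hC.eq (not_disjoint_iff.2 ⟨q.1, hj, hi⟩)
  exact ⟨hi, hjD⟩

lemma Set.preimage_snd_inter_iUnion_prod {X Y I : Type*} (C : I → Set X) {D : I → Set Y}
    (hD : Pairwise (Disjoint on D)) (i : I) :
    Prod.snd ⁻¹' D i ∩ ⋃ j, C j ×ˢ D j = C i ×ˢ D i := by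
  ext q
  simp only [mem_inter_iff, mem_preimage, mem_iUnion, mem_prod]
  refine ⟨fun ⟨hi, j, hjC, hj⟩ => ?_, fun ⟨hiC, hi⟩ => ⟨hi, i, hiC, hi⟩⟩
  obtain rfl : j = i := hD.eq (not_disjoint_iff.2 ⟨q.2, hj, hi⟩)
  exact ⟨hjC, hi⟩

lemma MeasureTheory.Measure.ae_fst_exists_of_ae {A B : Type*} [MeasurableSpace A]
    [MeasurableSpace B] [StandardBorelSpace B] {ρ : Measure (A × B)} [IsFiniteMeasure ρ]
    {P : A × B → Prop} (h : ∀ᵐ q ∂ρ, P q) : ∀ᵐ x ∂ρ.fst, ∃ y, P (x, y) := by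
  cases isEmpty_or_nonempty B
  · simp [Measure.eq_zero_of_isEmpty ρ]
  rw [← ρ.disintegrate ρ.condKernel] at h
  filter_upwards [Measure.ae_ae_of_ae_compProd h] with x hx
  exact hx.exists

lemma MeasureTheory.Measure.ae_snd_exists_of_ae {A B : Type*} [MeasurableSpace A]
    [MeasurableSpace B] [StandardBorelSpace A] {ρ : Measure (A × B)} [IsFiniteMeasure ρ]
    {P : A × B → Prop} (h : ∀ᵐ q ∂ρ, P q) : ∀ᵐ y ∂ρ.snd, ∃ x, P (x, y) := by
  rw [← Measure.fst_map_swap]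
  refine Measure.ae_fst_exists_of_ae (P := fun q => P q.swap) ?_
  rw [show (Prod.swap : A × B → B × A) = MeasurableEquiv.prodComm from rfl,
    ← MeasurableEquiv.map_ae, Filter.eventually_map]
  exact h

namespace IsCoupling

variable {X Y : Type*} [MeasurableSpace X] [MeasurableSpace Y] {μ : Measure X} {ν : Measure Y}
  {π : Measure (X × Y)}

lemma isProbabilityMeasure [IsProbabilityMeasure μ] (hπ : IsCoupling μ ν π) :
    IsProbabilityMeasure π :=
  ⟨by rw [← measure_univ (μ := μ), ← hπ.1, Measure.map_apply measurable_fst .univ, preimage_univ]⟩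

lemma fst_eq (hπ : IsCoupling μ ν π) : π.fst = μ := hπ.1

lemma snd_eq (hπ : IsCoupling μ ν π) : π.snd = ν := hπ.2

lemma measure_preimage_fst (hπ : IsCoupling μ ν π) {s : Set X} (hs : MeasurableSet s) :
    π (Prod.fst ⁻¹' s) = μ s := by
  rw [← hπ.1, Measure.map_apply measurable_fst hs]

lemma measure_preimage_snd (hπ : IsCoupling μ ν π) {t : Set Y} (ht : MeasurableSet t) :
    π (Prod.snd ⁻¹' t) = ν t := by
  rw [← hπ.2, Measure.map_apply measurable_snd ht]

lemma ae_fst (hπ : IsCoupling μ ν π) {P : X → Prop} (h : ∀ᵐ x ∂μ, P x) : ∀ᵐ q ∂π, P q.1 :=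
  ae_of_ae_map measurable_fst.aemeasurable (hπ.1 ▸ h)

lemma ae_snd (hπ : IsCoupling μ ν π) {P : Y → Prop} (h : ∀ᵐ y ∂ν, P y) : ∀ᵐ q ∂π, P q.2 :=
  ae_of_ae_map measurable_snd.aemeasurable (hπ.2 ▸ h)

variable {I : Type*} {C : I → Set X} {D : I → Set Y}

lemma tsum_measure_prod_right [Countable I] (hπ : IsCoupling μ ν π) {s : Set X}
    (hs : MeasurableSet s) (hDm : ∀ j, MeasurableSet (D j)) (hDd : Pairwise (Disjoint on D))
    (hD : ∀ᵐ y ∂ν, y ∈ ⋃ j, D j) : ∑' j, π (s ×ˢ D j) = μ s := by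
  rw [← measure_iUnion (fun j k h => (hDd h).set_prod_right s s) fun j => hs.prod (hDm j),
    ← prod_iUnion, prod_eq, measure_inter_conull (t := Prod.snd ⁻¹' ⋃ j, D j) (ae_iff.1 (hπ.ae_snd hD)),
    hπ.measure_preimage_fst hs]

lemma tsum_measure_prod_left [Countable I] (hπ : IsCoupling μ ν π) {t : Set Y}
    (ht : MeasurableSet t) (hCm : ∀ i, MeasurableSet (C i)) (hCd : Pairwise (Disjoint on C))
    (hC : ∀ᵐ x ∂μ, x ∈ ⋃ i, C i) : ∑' i, π (C i ×ˢ t) = ν t := by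
  rw [← measure_iUnion (fun i k h => (hCd h).set_prod_left t t) fun i => (hCm i).prod ht,
    ← iUnion_prod_const, prod_eq, inter_comm, measure_inter_conull (t := Prod.fst ⁻¹' ⋃ i, C i) (ae_iff.1 (hπ.ae_fst hC)),
    hπ.measure_preimage_snd ht]

lemma ae_mem_iUnion_of_ae_mem_iUnion_prod_left [Countable I] (hπ : IsCoupling μ ν π)
    (hCm : ∀ i, MeasurableSet (C i)) (h : ∀ᵐ q ∂π, q ∈ ⋃ i, C i ×ˢ D i) :
    ∀ᵐ x ∂μ, x ∈ ⋃ i, C i := by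
  rw [← hπ.1]
  exact (ae_map_iff measurable_fst.aemeasurable (.iUnion hCm)).2 <|
    h.mono fun q hq => mem_iUnion.2 ((mem_iUnion.1 hq).imp fun _ hi => hi.1)

lemma ae_mem_iUnion_of_ae_mem_iUnion_prod_right [Countable I] (hπ : IsCoupling μ ν π)
    (hDm : ∀ i, MeasurableSet (D i)) (h : ∀ᵐ q ∂π, q ∈ ⋃ i, C i ×ˢ D i) :
    ∀ᵐ y ∂ν, y ∈ ⋃ i, D i := by
  rw [← hπ.2]
  exact (ae_map_iff measurable_snd.aemeasurable (.iUnion hDm)).2 <|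
    h.mono fun q hq => mem_iUnion.2 ((mem_iUnion.1 hq).imp fun _ hi => hi.2)

lemma measure_eq_of_ae_mem_iUnion_prod (hπ : IsCoupling μ ν π)
    (hCm : ∀ i, MeasurableSet (C i)) (hDm : ∀ i, MeasurableSet (D i))
    (hCd : Pairwise (Disjoint on C)) (hDd : Pairwise (Disjoint on D))
    (h : ∀ᵐ q ∂π, q ∈ ⋃ i, C i ×ˢ D i) (i : I) : μ (C i) = ν (D i) := by
  have hG : π (⋃ j, C j ×ˢ D j)ᶜ = 0 := ae_iff.1 h
  rw [← hπ.measure_preimage_fst (hCm i), ← hπ.measure_preimage_snd (hDm i),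
    ← measure_inter_conull hG, ← measure_inter_conull (s := Prod.snd ⁻¹' D i) hG,
    preimage_fst_inter_iUnion_prod D hCd, preimage_snd_inter_iUnion_prod C hDd]

lemma measure_iUnion_prod_eq_one [IsProbabilityMeasure μ] [Countable I] {π₀ : Measure (X × Y)}
    (hπ : IsCoupling μ ν π) (hπ₀ : IsCoupling μ ν π₀)
    (hCm : ∀ i, MeasurableSet (C i)) (hDm : ∀ i, MeasurableSet (D i))
    (hCd : Pairwise (Disjoint on C)) (hDd : Pairwise (Disjoint on D))
    (h : ∀ᵐ q ∂π, q ∈ ⋃ i, C i ×ˢ D i) {r : I → I → Prop} [IsTrans I r] [Std.Antisymm r]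
    (hflow : ∀ i j, π₀ (C i ×ˢ D j) ≠ 0 → r j i) :
    π₀ (⋃ i, C i ×ˢ D i) = 1 := by
  have hC := hπ.ae_mem_iUnion_of_ae_mem_iUnion_prod_left hCm h
  have hD := hπ.ae_mem_iUnion_of_ae_mem_iUnion_prod_right hDm h
  have hrow i : ∑' j, π₀ (C i ×ˢ D j) = μ (C i) :=
    hπ₀.tsum_measure_prod_right (hCm i) hDm hDd hD
  have hcol j : ∑' i, π₀ (C i ×ˢ D j) = ν (D j) :=
    hπ₀.tsum_measure_prod_left (hDm j) hCm hCd hC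
  have htotal : ∑' i, μ (C i) = 1 := by
    rw [← measure_iUnion hCd hCm, ← prob_compl_eq_zero_iff (.iUnion hCm)]
    exact ae_iff.1 hC
  have hdiag i j (hij : i ≠ j) : π₀ (C i ×ˢ D j) = 0 :=
    eq_zero_of_ne_of_row_eq_col (by simp only [hrow, htotal]; exact ENNReal.one_ne_top)
      (fun i => by rw [hrow, hcol, hπ.measure_eq_of_ae_mem_iUnion_prod hCm hDm hCd hDd h]) hflow hij
  calc π₀ (⋃ i, C i ×ˢ D i) = ∑' i, π₀ (C i ×ˢ D i) :=
        measure_iUnion (fun i j h => (hCd h).set_prod_left _ _) fun i => (hCm i).prod (hDm i)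
    _ = ∑' i, μ (C i) :=
        tsum_congr fun i => by rw [← hrow, tsum_eq_single i fun j hj => hdiag i j hj.symm]
    _ = 1 := htotal

end IsCoupling

lemma exists_chainLe_of_measure_prod_ne_zero {X Y : Type*} [MeasurableSpace X]
    [MeasurableSpace Y] {c : X × Y → ℝ≥0∞} {Γ : Set (X × Y)} {ρ : Measure (X × Y)}
    {s : Set X} {t : Set Y}
    (hρ : ∀ᵐ q ∂ρ, c q < ⊤ ∧ (∃ y, (q.1, y) ∈ Γ) ∧ ∃ x, (x, q.2) ∈ Γ) (h : ρ (s ×ˢ t) ≠ 0) :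
    ∃ a ∈ Γ, ∃ b ∈ Γ, a.2 ∈ t ∧ b.1 ∈ s ∧ ChainLe c Γ a b := by
  obtain ⟨q, hq, hcq, ⟨y, hy⟩, x, hx⟩ :=
    Measure.exists_mem_of_measure_ne_zero_of_ae h (ae_restrict_of_ae hρ)
  exact ⟨(x, q.2), hx, (q.1, y), hy, hq.2, hq.1, chainLe_of_cost_lt_top hx hy hcq⟩

theorem second_plan_concentrated_on_classes_general
    {X Y : Type*} [MeasurableSpace X] [TopologicalSpace X] [PolishSpace X] [BorelSpace X]
    [MeasurableSpace Y] [TopologicalSpace Y] [PolishSpace Y] [BorelSpace Y]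
    (μ : Measure X) (ν : Measure Y) [IsProbabilityMeasure μ] [IsProbabilityMeasure ν]
    (c : X × Y → ℝ≥0∞) (hc : Measurable c)
    (π π₀ : Measure (X × Y)) (hπ : IsCoupling μ ν π) (hπ₀ : IsCoupling μ ν π₀)
    (hπ₀fin : ∫⁻ p, c p ∂π₀ ≠ ⊤)
    (Γ : Set (X × Y)) (hΓm : MeasurableSet Γ) (hΓ1 : π Γ = 1)
    {I : Type*} [Countable I]
    (C : I → Set X) (D : I → Set Y)
    (hCm : ∀ i, MeasurableSet (C i)) (hDm : ∀ i, MeasurableSet (D i))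
    (hCd : ∀ i j, i ≠ j → Disjoint (C i) (C j))
    (hDd : ∀ i j, i ≠ j → Disjoint (D i) (D j))
    (hclass : ∀ p ∈ Γ, ∃ i, {q ∈ Γ | ChainEquiv c Γ p q} = Γ ∩ (C i) ×ˢ (D i))
    (hclass' : ∀ i, ∃ p ∈ Γ, {q ∈ Γ | ChainEquiv c Γ p q} = Γ ∩ (C i) ×ˢ (D i)) :
    π₀ (⋃ i, (C i) ×ˢ (D i)) = 1 := by
  have := hπ.isProbabilityMeasure
  choose p hpΓ hpclass using hclass'
  have hclass_iff : ∀ i, ∀ q ∈ Γ, ChainEquiv c Γ (p i) q ↔ q ∈ C i ×ˢ D i := fun i q hq => by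
    simpa [hq] using Set.ext_iff.1 (hpclass i) q
  have hΓ : ∀ᵐ q ∂π, q ∈ Γ := ae_iff.2 ((prob_compl_eq_zero_iff hΓm).2 hΓ1)
  have hΓsub : Γ ⊆ ⋃ i, C i ×ˢ D i := fun q hq => (hclass q hq).elim fun i hi =>
    mem_iUnion_of_mem i ((Set.ext_iff.1 hi q).1 ⟨hq, chainEquiv_refl hq⟩).2
  have hπ₀Γ : ∀ᵐ q ∂π₀, c q < ⊤ ∧ (∃ y, (q.1, y) ∈ Γ) ∧ ∃ x, (x, q.2) ∈ Γ := by
    filter_upwards [ae_lt_top hc hπ₀fin, hπ₀.ae_fst (hπ.fst_eq ▸ Measure.ae_fst_exists_of_ae hΓ),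
      hπ₀.ae_snd (hπ.snd_eq ▸ Measure.ae_snd_exists_of_ae hΓ)] with q h₁ h₂ h₃ using ⟨h₁, h₂, h₃⟩
  have : IsTrans I fun i j => ChainLe c Γ (p i) (p j) := ⟨fun _ _ _ => ChainLe.trans⟩
  have : Std.Antisymm fun i j => ChainLe c Γ (p i) (p j) := ⟨fun i j hij hji =>
    of_not_not fun hne => (hCd i j hne).ne_of_mem ((hclass_iff i _ (hpΓ j)).1 ⟨hij, hji⟩).1
      ((hclass_iff j _ (hpΓ j)).1 (chainEquiv_refl (hpΓ j))).1 rfl⟩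
  refine hπ.measure_iUnion_prod_eq_one hπ₀ hCm hDm hCd hDd (hΓ.mono hΓsub)
    (r := fun i j => ChainLe c Γ (p i) (p j)) fun i j hij => ?_
  obtain ⟨a, ha, b, hb, haD, hbC, hab⟩ := exists_chainLe_of_measure_prod_ne_zero hπ₀Γ hij
  have haj : a ∈ C j ×ˢ D j := preimage_snd_inter_iUnion_prod C hDd j ▸ ⟨haD, hΓsub ha⟩
  have hbi : b ∈ C i ×ˢ D i := preimage_fst_inter_iUnion_prod D hCd i ▸ ⟨hbC, hΓsub hb⟩
  exact (((hclass_iff j a ha).2 haj).1.trans hab).trans ((hclass_iff i b hb).2 hbi).2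

theorem second_plan_concentrated_on_classes
    {X Y : Type*} [MeasurableSpace X] [TopologicalSpace X] [PolishSpace X] [BorelSpace X]
    [MeasurableSpace Y] [TopologicalSpace Y] [PolishSpace Y] [BorelSpace Y]
    (μ : Measure X) (ν : Measure Y) [IsProbabilityMeasure μ] [IsProbabilityMeasure ν]
    (c : X × Y → ℝ≥0∞) (hc : Measurable c)
    (π π₀ : Measure (X × Y)) (hπ : IsCoupling μ ν π) (hπ₀ : IsCoupling μ ν π₀)
    (hπfin : ∫⁻ p, c p ∂π ≠ ⊤) (hπ₀fin : ∫⁻ p, c p ∂π₀ ≠ ⊤)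
    (Γ : Set (X × Y)) (hΓm : MeasurableSet Γ) (hΓ1 : π Γ = 1)
    (hΓfin : ∀ p ∈ Γ, c p < ⊤)
    {I : Type*} [Countable I]
    (C : I → Set X) (D : I → Set Y)
    (hCm : ∀ i, MeasurableSet (C i)) (hDm : ∀ i, MeasurableSet (D i))
    (hCd : ∀ i j, i ≠ j → Disjoint (C i) (C j))
    (hDd : ∀ i j, i ≠ j → Disjoint (D i) (D j))
    (hclass : ∀ p ∈ Γ, ∃ i, {q ∈ Γ | ChainEquiv c Γ p q} = Γ ∩ (C i) ×ˢ (D i))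
    (hclass' : ∀ i, ∃ p ∈ Γ, {q ∈ Γ | ChainEquiv c Γ p q} = Γ ∩ (C i) ×ˢ (D i)) :
    π₀ (⋃ i, (C i) ×ˢ (D i)) = 1 :=
  second_plan_concentrated_on_classes_general μ ν c hc π π₀ hπ hπ₀ hπ₀fin Γ hΓm hΓ1 C D hCm hDm hCd
    hDd hclass hclass'
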